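/- Let n ≥ 1, let B_r(x₀) ⊂ ℝⁿ be an open ball, and let u be a C² function on a neighborhood of the closed ball satisfying Δu ≥ c in B_r(x₀) for some constant c > 0 and u(x₀) ≥ 0. Then sup over the closed ball B_r(x₀) of u is at least c·r²/(2n). -/

import Mathlib

/-!
Let `M = max u` on the closed ball and compare `u` with the paraboloid `M |x - x₀|² / r²`.
The difference `w` is `≤ 0` on the sphere and `≥ 0` at the centre, so it attains its maximum
at an interior point `y`. There every second directional derivative of `w` is `≤ 0`, i.e.
`∂ᵢ²u(y) ≤ 2M / r²`, and summing over the coordinate directions gives `c ≤ Δu(y) ≤ 2nM / r²`.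
-/

open Metric Set Filter Topology
open scoped RealInnerProductSpace

theorem IsLocalMax.second_deriv_nonpos {g g' : ℝ → ℝ} {a g'' : ℝ} (hmax : IsLocalMax g a)
    (hg : ∀ᶠ t in 𝓝 a, HasDerivAt g (g' t) t) (hg' : HasDerivAt g' g'' a) : g'' ≤ 0 := by
  -- otherwise `g'` vanishes at `a` with positive slope, so `g` increases strictly right of `a`
  by_contra! hpos
  have hg'a : g' a = 0 := hmax.hasDerivAt_eq_zero hg.self_of_nhds
  have hright : ∀ᶠ t in 𝓝[>] a, 0 < g' t ∧ HasDerivAt g (g' t) t := by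
    have hslope := (hasDerivAt_iff_tendsto_slope.1 hg').eventually (eventually_gt_nhds hpos)
    filter_upwards [nhdsGT_le_nhdsNE a hslope, nhdsWithin_le_nhds hg, self_mem_nhdsWithin]
      with t hs hd (ht : a < t)
    rw [slope_def_field, hg'a, sub_zero] at hs
    exact ⟨(div_pos_iff_of_pos_right (sub_pos.2 ht)).1 hs, hd⟩
  obtain ⟨b, hab, hsub⟩ := mem_nhdsGT_iff_exists_Ioo_subset.1 hright
  have hmono : StrictMonoOn g (Ico a b) := by
    refine strictMonoOn_of_hasDerivWithinAt_pos (f' := g') (convex_Ico a b) (fun t ht => ?_)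
      (fun t ht => ?_) (fun t ht => ?_)
    · rcases ht.1.eq_or_lt with rfl | hat
      · exact hg.self_of_nhds.continuousAt.continuousWithinAt
      · exact (hsub ⟨hat, ht.2⟩).2.continuousAt.continuousWithinAt
    · rw [interior_Ico] at ht ⊢
      exact (hsub ht).2.hasDerivWithinAt
    · rw [interior_Ico] at ht
      exact (hsub ht).1
  obtain ⟨t, hle, ht⟩ := ((hmax.filter_mono nhdsWithin_le_nhds).and (Ioo_mem_nhdsGT hab)).exists
  exact (hmono (left_mem_Ico.2 hab) (Ioo_subset_Ico_self ht) ht.1).not_ge hle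

theorem IsLocalMax.iteratedFDeriv_two_nonpos {E : Type*} [NormedAddCommGroup E] [NormedSpace ℝ E]
    {f : E → ℝ} {y : E} (hmax : IsLocalMax f y) (hf : ContDiffAt ℝ 2 f y) (v : E) :
    iteratedFDeriv ℝ 2 f y ![v, v] ≤ 0 := by
  set line : ℝ → E := fun t => y + t • v
  have hline : ∀ t, HasDerivAt line v t := fun t => by
    simpa only [one_smul] using ((hasDerivAt_id' t).smul_const v).const_add y
  have hline0 : line 0 = y := by simp [line]
  have hcont : ContinuousAt line 0 := (hline 0).continuousAt
  refine IsLocalMax.second_deriv_nonpos (g := f ∘ line) (g' := fun t => fderiv ℝ f (line t) v)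
    ((hline0 ▸ hmax).comp_continuous hcont) ?_ ?_
  · filter_upwards [hcont.eventually (hline0 ▸ hf.eventually (by simp))] with t ht
    exact (ht.differentiableAt (by norm_num)).hasFDerivAt.comp_hasDerivAt t (hline t)
  · have hF : DifferentiableAt ℝ (fderiv ℝ f) y :=
      (hf.fderiv_right (m := 1) le_rfl).differentiableAt one_ne_zero
    rw [iteratedFDeriv_two_apply]
    simpa using (hF.hasFDerivAt.comp_hasDerivAt_of_eq 0 (hline 0) hline0.symm).clm_apply
      (hasDerivAt_const 0 v)

theorem iteratedFDeriv_two_norm_sub_sq {F : Type*} [NormedAddCommGroup F] [InnerProductSpace ℝ F]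
    (x₀ y v w : F) : iteratedFDeriv ℝ 2 (fun x => ‖x - x₀‖ ^ 2) y ![v, w] = 2 * ⟪v, w⟫ := by
  have hD : fderiv ℝ (fun x => ‖x - x₀‖ ^ 2) = fun x => (2 • innerSL ℝ) (x - x₀) := by
    funext x
    simpa using ((hasFDerivAt_id x).sub_const x₀).norm_sq.fderiv
  rw [iteratedFDeriv_two_apply, hD, fderiv_comp_sub, ContinuousLinearMap.fderiv]
  simp [innerSL_apply_apply ℝ]

theorem IsLocalMax.iteratedFDeriv_two_le_of_sub_norm_sq {F : Type*} [NormedAddCommGroup F]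
    [InnerProductSpace ℝ F] {u : F → ℝ} {x₀ y : F} {a : ℝ}
    (hmax : IsLocalMax (fun x => u x - a * ‖x - x₀‖ ^ 2) y) (hu : ContDiffAt ℝ 2 u y) (v : F) :
    iteratedFDeriv ℝ 2 u y ![v, v] ≤ 2 * a * ‖v‖ ^ 2 := by
  set q : F → ℝ := fun x => ‖x - x₀‖ ^ 2
  have hq : ContDiffAt ℝ 2 q y :=
    (contDiff_norm_sq ℝ).contDiffAt.comp y (contDiffAt_id.sub contDiffAt_const)
  have haq : ContDiffAt ℝ 2 (a • q) y := hq.const_smul a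
  have hnonpos := IsLocalMax.iteratedFDeriv_two_nonpos (f := u - a • q) hmax (hu.sub haq) v
  rw [iteratedFDeriv_sub_apply hu haq, iteratedFDeriv_const_smul_apply hq] at hnonpos
  simp only [sub_apply, smul_apply, q,
    iteratedFDeriv_two_norm_sub_sq, real_inner_self_eq_norm_sq, smul_eq_mul] at hnonpos
  linarith

theorem exists_mem_ball_isMaxOn_closedBall {X : Type*} [PseudoMetricSpace X] [ProperSpace X]
    {w : X → ℝ} {x₀ : X} {r : ℝ} (hr : 0 < r) (hw : ContinuousOn w (closedBall x₀ r))
    (hsphere : ∀ x ∈ sphere x₀ r, w x ≤ w x₀) :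
    ∃ y ∈ ball x₀ r, IsMaxOn w (closedBall x₀ r) y := by
  obtain ⟨z, hz, hzmax⟩ :=
    (isCompact_closedBall x₀ r).exists_isMaxOn (nonempty_closedBall.2 hr.le) hw
  rcases (mem_closedBall.1 hz).lt_or_eq with hlt | heq
  · exact ⟨z, mem_ball.2 hlt, hzmax⟩
  · exact ⟨x₀, mem_ball_self hr, fun x hx => (hzmax hx).trans (hsphere z (mem_sphere.2 heq))⟩

theorem exists_mem_ball_iteratedFDeriv_two_le {F : Type*} [NormedAddCommGroup F]
    [InnerProductSpace ℝ F] [ProperSpace F] {u : F → ℝ} {x₀ : F} {r M : ℝ} (hr : 0 < r)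
    (hcont : ContinuousOn u (closedBall x₀ r)) (hu : ContDiffOn ℝ 2 u (ball x₀ r))
    (hu₀ : 0 ≤ u x₀) (hM : ∀ x ∈ closedBall x₀ r, u x ≤ M) :
    ∃ y ∈ ball x₀ r, ∀ v, iteratedFDeriv ℝ 2 u y ![v, v] ≤ 2 * (M / r ^ 2) * ‖v‖ ^ 2 := by
  obtain ⟨y, hy, hmax⟩ := exists_mem_ball_isMaxOn_closedBall
    (w := fun x => u x - M / r ^ 2 * ‖x - x₀‖ ^ 2) hr (hcont.sub (by fun_prop)) fun x hx => by
      have hux := hM x (sphere_subset_closedBall hx)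
      rw [mem_sphere, dist_eq_norm] at hx
      simp [hx, hr.ne']
      linarith
  exact ⟨y, hy, IsLocalMax.iteratedFDeriv_two_le_of_sub_norm_sq
    (hmax.isLocalMax (closedBall_mem_nhds_of_mem hy)) (hu.contDiffAt (isOpen_ball.mem_nhds hy))⟩

theorem stmt_7_general (n : ℕ) (hn : 1 ≤ n) (x₀ : EuclideanSpace ℝ (Fin n)) (r c : ℝ)
    (hr : 0 < r) (u : EuclideanSpace ℝ (Fin n) → ℝ)
    (U : Set (EuclideanSpace ℝ (Fin n)))
    (hBU : Metric.closedBall x₀ r ⊆ U) (hu : ContDiffOn ℝ 2 u U)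
    (hΔ : ∀ x ∈ Metric.ball x₀ r,
      c ≤ ∑ i : Fin n, iteratedFDeriv ℝ 2 u x
        ![EuclideanSpace.single i (1 : ℝ), EuclideanSpace.single i (1 : ℝ)])
    (hu0 : 0 ≤ u x₀) :
    ∃ x ∈ Metric.closedBall x₀ r, c * r ^ 2 / (2 * n) ≤ u x := by
  have hcont : ContinuousOn u (closedBall x₀ r) := hu.continuousOn.mono hBU
  obtain ⟨z, hz, hzmax⟩ :=
    (isCompact_closedBall x₀ r).exists_isMaxOn (nonempty_closedBall.2 hr.le) hcont
  obtain ⟨y, hy, hHess⟩ := exists_mem_ball_iteratedFDeriv_two_le hr hcont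
    (hu.mono (ball_subset_closedBall.trans hBU)) hu0 fun x hx => hzmax hx
  have hcz : c ≤ n * (2 * (u z / r ^ 2)) :=
    calc c ≤ _ := hΔ y hy
      _ ≤ ∑ i : Fin n, 2 * (u z / r ^ 2) * ‖EuclideanSpace.single i (1 : ℝ)‖ ^ 2 :=
        Finset.sum_le_sum fun i _ => hHess _
      _ = n * (2 * (u z / r ^ 2)) := by simp
  have hn' : (0 : ℝ) < n := by exact_mod_cast hn
  refine ⟨z, hz, ?_⟩
  rw [div_le_iff₀ (by positivity)]
  calc c * r ^ 2 ≤ n * (2 * (u z / r ^ 2)) * r ^ 2 := by gcongr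
    _ = u z * (2 * n) := by field_simp

/-- Quantitative growth for strictly subharmonic functions: if `u` is `C²` on a
neighborhood of the closed ball `B_r(x₀)`, `Δu ≥ c > 0` on the open ball and
`u(x₀) ≥ 0`, then `sup_{closure B_r(x₀)} u ≥ c r² / (2n)`. -/
theorem stmt_7 (n : ℕ) (hn : 1 ≤ n) (x₀ : EuclideanSpace ℝ (Fin n)) (r c : ℝ)
    (hr : 0 < r) (hc : 0 < c) (u : EuclideanSpace ℝ (Fin n) → ℝ)
    (U : Set (EuclideanSpace ℝ (Fin n))) (hU : IsOpen U)
    (hBU : Metric.closedBall x₀ r ⊆ U) (hu : ContDiffOn ℝ 2 u U)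
    (hΔ : ∀ x ∈ Metric.ball x₀ r,
      c ≤ ∑ i : Fin n, iteratedFDeriv ℝ 2 u x
        ![EuclideanSpace.single i (1 : ℝ), EuclideanSpace.single i (1 : ℝ)])
    (hu0 : 0 ≤ u x₀) :
    ∃ x ∈ Metric.closedBall x₀ r, c * r ^ 2 / (2 * n) ≤ u x :=
  stmt_7_general n hn x₀ r c hr u U hBU hu hΔ hu0
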